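/- Let X be a topological space, let F be a sheaf of abelian groups on X, and let f : F → F be a morphism of sheaves satisfying f ∘ f = f. Then the image presheaf of f, i.e., the subpresheaf of F given by U ↦ (f_U)(F(U)), satisfies the sheaf condition (it is a sheaf). -/

import Mathlib

open CategoryTheory CategoryTheory.GrothendieckTopology

universe v u

theorem CategoryTheory.Presheaf.IsSheaf.isSheaf_comp_of_isCorepresentable {C : Type*}
    [Category C] {A : Type u} [Category.{v} A] {J : GrothendieckTopology C} {P : Cᵒᵖ ⥤ A}
    (hP : Presheaf.IsSheaf J P) (G : A ⥤ Type v) [G.IsCorepresentable] :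
    Presieve.IsSheaf J (P ⋙ G) :=
  Presieve.isSheaf_iso J (Functor.isoWhiskerLeft P G.coreprW) (hP G.coreprX)

/- A section `s` of `P` all of whose restrictions along a covering sieve lie in the range of the
idempotent `φ` is fixed by `φ`, by separatedness and naturality; so it lies in the range itself. -/
theorem CategoryTheory.Subfunctor.isSheaf_range_of_idempotent {C : Type*} [Category C]
    {J : GrothendieckTopology C} {P : Cᵒᵖ ⥤ Type*} (hP : Presieve.IsSheaf J P)
    (φ : P ⟶ P) (hφ : φ ≫ φ = φ) : Presieve.IsSheaf J (Subfunctor.range φ).toFunctor := by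
  have fixes_range : ∀ U, ∀ x ∈ Set.range (φ.app U), φ.app U x = x := by
    rintro U _ ⟨y, rfl⟩
    exact types_congr_hom (congrArg (fun g => g.app U) hφ) y
  rw [(Subfunctor.range φ).isSheaf_iff hP]
  intro U s hs
  refine ⟨s, (hP _ hs).isSeparatedFor.ext fun V i hi => ?_⟩
  rw [← NatTrans.naturality_apply]
  exact fixes_range _ _ hi

theorem statement16 (X : TopCat) (F : TopCat.Sheaf AddCommGrpCat X)
    (f : F.1 ⟶ F.1) (hf : f ≫ f = f) :
    TopCat.Presheaf.IsSheaf
      ((Subfunctor.range (Functor.whiskerRight f (forget AddCommGrpCat))).toFunctor) := by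
  refine (isSheaf_iff_isSheaf_of_type _ _).mpr
    (Subfunctor.isSheaf_range_of_idempotent
      (F.property.isSheaf_comp_of_isCorepresentable (forget AddCommGrpCat)) _ ?_)
  rw [← Functor.whiskerRight_comp, hf]
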